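/- arXiv:1208.4724 — 3 statements merged into one kernel-verified Lean document; each statement's English description precedes it below -/
import Mathlib

section
/- Let L be a complete lattice, o : L → EReal a supremum-preserving map with o(P) > −∞ for all P > ⊥, and suppose there is a family (Pᵢ)_{i∈I} in L with ⨆ᵢ Pᵢ = ⊤ and o(Pᵢ) < +∞ for all i. Then the right adjoint E of o satisfies E(−∞) = ⊥ and ⨆_{r ∈ ℝ} E(r) = ⊤ (where the supremum is over real r, excluding +∞). -/
/-- The right adjoint of an abstract q-observable function is a genuine extended
spectral family: `E (−∞) = ⊥` and `⨆_{r ∈ ℝ} E r = ⊤`. -/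
theorem stmt_7 {L : Type*} [CompleteLattice L] (o : L → EReal)
    (ho : ∀ S : Set L, o (sSup S) = ⨆ P ∈ S, o P)
    (ha : ∀ P : L, ⊥ < P → ⊥ < o P)
    {ι : Type*} (Pf : ι → L) (hcov : (⨆ i, Pf i) = ⊤) (hfin : ∀ i, o (Pf i) < ⊤) :
    sSup {P : L | o P ≤ (⊥ : EReal)} = ⊥ ∧
    (⨆ r : ℝ, sSup {P : L | o P ≤ (r : EReal)}) = ⊤ := by
  constructor
  · apply le_antisymm _ bot_le
    apply sSup_le
    intro P hP
    by_contra h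
    have hb : ⊥ < P := lt_of_le_of_ne bot_le (fun e => h (e ▸ le_refl ⊥))
    exact absurd (le_antisymm hP (ha P hb).le) (ha P hb).ne'
  · apply le_antisymm le_top
    rw [← hcov]
    apply iSup_le
    intro i
    have h := hfin i
    obtain ⟨r, hr⟩ : ∃ r : ℝ, o (Pf i) ≤ (r : EReal) := by
      cases hx : o (Pf i) with
      | bot => exact ⟨0, by simp⟩
      | coe x => exact ⟨x, by simp [hx]⟩
      | top => exact absurd hx (ne_of_lt h)
    exact le_iSup_of_le r (le_sSup hr)
end

section
/- Let L be a complete lattice and E : EReal → L infimum-preserving with left adjoint o. For a real constant t, define f(r) = r + t on EReal (with −∞ + t = −∞, +∞ + t = +∞). Then f preserves arbitrary suprema, and the left adjoint of E ∘ f⁻¹ (equivalently of r ↦ E(r − t)) equals o + t, i.e., ⨅ {r ∈ EReal | P ≤ E(r − t)} = o(P) + t for all P ∈ L. -/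
noncomputable def EReal.addCoeOrderIso (t : ℝ) : EReal ≃o EReal where
  toFun x := x + (t : EReal)
  invFun x := x - (t : EReal)
  left_inv _ := EReal.add_sub_cancel_right
  right_inv _ := EReal.sub_add_cancel
  map_rel_iff' := (EReal.addLECancellable_coe t).add_le_add_iff_right

theorem stmt_15_general {L : Type*} [CompleteLattice L] (E : EReal → L)
    (t : ℝ) :
    (∀ S : Set EReal, sSup S + (t : EReal) = ⨆ r ∈ S, (r + (t : EReal))) ∧
    (∀ P : L,
      sInf {r : EReal | P ≤ E (r - (t : EReal))} =
        sInf {r : EReal | P ≤ E r} + (t : EReal)) :=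
  ⟨(EReal.addCoeOrderIso t).map_sSup, fun P =>
    ((EReal.addCoeOrderIso t).map_sInf_eq_sInf_symm_preimage {r | P ≤ E r}).symm⟩

/-- Translation: `r ↦ r + t` preserves arbitrary suprema on `EReal`, and the
q-observable function of the translated spectral family `r ↦ E (r − t)` is `o + t`. -/
theorem stmt_15 {L : Type*} [CompleteLattice L] (E : EReal → L)
    (hE : ∀ S : Set EReal, E (sInf S) = ⨅ r ∈ S, E r) (t : ℝ) :
    (∀ S : Set EReal, sSup S + (t : EReal) = ⨆ r ∈ S, (r + (t : EReal))) ∧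
    (∀ P : L,
      sInf {r : EReal | P ≤ E (r - (t : EReal))} =
        sInf {r : EReal | P ≤ E r} + (t : EReal)) :=
  stmt_15_general E t
end

section
/- Let L be a complete orthocomplemented lattice with orthocomplement P ↦ Pᶜ, and let E : EReal → L be an infimum-preserving map. Define o(P) = ⨅ {r ∈ EReal | P ≤ E(r)} and a(P) = ⨆ {r ∈ EReal | P ≤ E(r)ᶜ}. Then for all P ∈ L with ⊥ < P < ⊤, a(P) ≤ o(P). -/
/-- In a complete orthocomplemented lattice, the q-antonymous function is below the
q-observable function on proper nontrivial elements: `a P ≤ o P` for `⊥ < P < ⊤`. -/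
theorem stmt_18 {L : Type*} [CompleteLattice L] (compl : L → L)
    (hanti : Antitone compl) (hinv : ∀ P : L, compl (compl P) = P)
    (hmeet : ∀ P : L, P ⊓ compl P = ⊥) (hjoin : ∀ P : L, P ⊔ compl P = ⊤)
    (E : EReal → L) (hE : ∀ S : Set EReal, E (sInf S) = ⨅ r ∈ S, E r) :
    ∀ P : L, ⊥ < P → P < ⊤ →
      sSup {r : EReal | P ≤ compl (E r)} ≤ sInf {r : EReal | P ≤ E r} := by
  intro P hbot htop
  have hmono : Monotone E := by
    intro r s hrs
    have h1 : sInf ({r, s} : Set EReal) = r := by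
      simp [sInf_pair, hrs]
    have h2 := hE {r, s}
    rw [h1] at h2
    rw [iInf_pair] at h2
    exact h2 ▸ inf_le_right
  apply sSup_le
  intro a ha
  apply le_sInf
  intro b hb
  by_contra hab
  push_neg at hab
  have hEle : E b ≤ E a := hmono hab.le
  have : P ≤ E a ⊓ compl (E a) := le_inf (le_trans hb hEle) ha
  rw [hmeet] at this
  exact absurd (le_antisymm this bot_le) hbot.ne'
end
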